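/- arXiv:2103.14893 — 7 statements merged into one kernel-verified Lean document; each statement's English description precedes it below -/
import Mathlib

section
/- Let a ∈ ℂ, let n ≥ 2 and k ≥ 1 be integers, let p₁,…,p_k be non-vanishing rational functions, let α₁,…,α_k be non-constant polynomials with deg(α_i − α_j) ≥ 1 for all 1 ≤ i ≠ j ≤ k, and let P_d(z,f) be a differential polynomial in f with rational coefficients. Then no rational function f satisfies f(z)ⁿ + a·f(z)^{n−2}·f′(z) + P_d(z,f) = Σ_{i=1}^{k} p_i(z)·exp(α_i(z)) for all z outside the finitely many poles involved; i.e., every meromorphic solution of this equation is transcendental. -/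
/-!
For rational `f` the whole left-hand side `L` is rational, since derivatives of rational
functions are rational. The equation then says that `-L · exp 0 + ∑ pᵢ · exp αᵢ` vanishes
off a finite set, with exponents `0, α₁, …, α_k` whose pairwise differences are
non-constant. Clearing denominators and using continuity gives such an identity with
polynomial coefficients everywhere, and Borel's theorem forces every coefficient to vanish,
contradicting `p₁ ≠ 0`.

Borel's theorem for polynomial coefficients goes by induction on the number of terms.
Multiplying by `exp (-α_a)`, differentiating and multiplying back by `exp α_a` maps the
coefficients `q_i` to `q_i' + (α_i' - α_a') q_i`. Done `deg q_a + 1` times this kills `q_a`,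
while for `i ≠ a` the map is injective because `α_i' - α_a' ≠ 0`.
-/

open Complex Polynomial Finset

/-- `q : ℂ → ℂ` is a rational function: it agrees with a quotient of two complex
polynomials (with non-zero denominator) away from the zeros of the denominator. -/
def IsRat (q : ℂ → ℂ) : Prop :=
  ∃ A B : Polynomial ℂ, B ≠ 0 ∧ ∀ z : ℂ, B.eval z ≠ 0 → q z = A.eval z / B.eval z

/-- `q : ℂ → ℂ` is a non-vanishing (i.e. not identically zero) rational function. -/
def IsNZRat (q : ℂ → ℂ) : Prop :=
  ∃ A B : Polynomial ℂ, A ≠ 0 ∧ B ≠ 0 ∧ ∀ z : ℂ, B.eval z ≠ 0 → q z = A.eval z / B.eval z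

/-- Two functions agree for every `z` outside some finite (exceptional/pole) set. -/
def EqOffFinite (g h : ℂ → ℂ) : Prop :=
  ∃ S : Set ℂ, S.Finite ∧ ∀ z ∉ S, g z = h z

/-- `f` is meromorphic on `ℂ` with finitely many poles: it is analytic away from a finite
set `S`, and at each point of `S` it is meromorphic (a pole or removable singularity). -/
def MeroFinPoles (f : ℂ → ℂ) : Prop :=
  ∃ S : Finset ℂ,
    (∀ z ∉ S, AnalyticAt ℂ f z) ∧
    ∀ z ∈ S, ∃ n : ℕ, AnalyticAt ℂ (fun w => (w - z) ^ n * f w) z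

/-- `P : ℂ → ℂ` is (the value at `f` of) a differential polynomial in `f` of degree at most
`d` with rational coefficients:
`P(z) = ∑ _{λ ∈ Λ} a_λ(z) ∏ _{i=0}^{m} (f^{(i)}(z))^{λ_i}` with `∑ λ_i ≤ d`,
the identity holding off a finite set (the poles of the coefficients). -/
def IsDiffPolyAt (d : ℕ) (f P : ℂ → ℂ) : Prop :=
  ∃ (m : ℕ) (L : Finset (Fin (m + 1) → ℕ)) (a : (Fin (m + 1) → ℕ) → ℂ → ℂ),
    (∀ lam ∈ L, IsRat (a lam)) ∧
    (∀ lam ∈ L, (∑ i, lam i) ≤ d) ∧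
    ∃ S : Set ℂ, S.Finite ∧ ∀ z ∉ S,
      P z = ∑ lam ∈ L, a lam z * ∏ i : Fin (m + 1), (iteratedDeriv i.val f z) ^ lam i

/-- `Q` is a differential-polynomial operator of degree at most `d` with rational
coefficients, acting on an arbitrary function `f`. -/
def IsDiffPolyOp (d : ℕ) (Q : (ℂ → ℂ) → ℂ → ℂ) : Prop :=
  ∃ (m : ℕ) (L : Finset (Fin (m + 1) → ℕ)) (a : (Fin (m + 1) → ℕ) → ℂ → ℂ),
    (∀ lam ∈ L, IsRat (a lam)) ∧
    (∀ lam ∈ L, (∑ i, lam i) ≤ d) ∧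
    ∃ S : Set ℂ, S.Finite ∧ ∀ (f : ℂ → ℂ), ∀ z ∉ S,
      Q f z = ∑ lam ∈ L, a lam z * ∏ i : Fin (m + 1), (iteratedDeriv i.val f z) ^ lam i


open Filter Topology

namespace Polynomial

variable {R : Type*} [Semiring R] [NoZeroDivisors R]

theorem derivative_add_mul_ne_zero {c p : R[X]} (hc : c ≠ 0) (hp : p ≠ 0) :
    derivative p + c * p ≠ 0 := by
  intro h
  have hcoeff := congrArg (coeff · (c.natDegree + p.natDegree)) h
  have hder : (derivative p).coeff (c.natDegree + p.natDegree) = 0 := by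
    rw [coeff_derivative, coeff_eq_zero_of_natDegree_lt (by omega), zero_mul]
  simp only [coeff_add, hder, coeff_mul_degree_add_degree, zero_add, coeff_zero] at hcoeff
  exact mul_ne_zero (leadingCoeff_ne_zero.mpr hc) (leadingCoeff_ne_zero.mpr hp) hcoeff

theorem iterate_derivative_add_mul_ne_zero {c p : R[X]} (hc : c ≠ 0) (hp : p ≠ 0) (N : ℕ) :
    (fun q => derivative q + c * q)^[N] p ≠ 0 := by
  induction N generalizing p with
  | zero => exact hp
  | succ N ih => exact ih (derivative_add_mul_ne_zero hc hp)

end Polynomial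

theorem Polynomial.eventually_cofinite_eval_ne_zero {R : Type*} [CommRing R] [IsDomain R]
    {p : R[X]} (hp : p ≠ 0) : ∀ᶠ z in cofinite, p.eval z ≠ 0 :=
  (p.finite_setOfPred_isRoot hp).eventually_cofinite_notMem

section ExpPoly

variable {ι : Type*}

noncomputable def expPoly (s : Finset ι) (q α : ι → ℂ[X]) (z : ℂ) : ℂ :=
  ∑ i ∈ s, (q i).eval z * Complex.exp ((α i).eval z)

theorem continuous_expPoly (s : Finset ι) (q α : ι → ℂ[X]) : Continuous (expPoly s q α) :=
  continuous_finsetSum _ fun i _ =>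
    (q i).continuous.mul (Complex.continuous_exp.comp (α i).continuous)

theorem hasDerivAt_expPoly (s : Finset ι) (q α : ι → ℂ[X]) (z : ℂ) :
    HasDerivAt (expPoly s q α)
      (expPoly s (fun i => derivative (q i) + derivative (α i) * q i) α z) z := by
  refine HasDerivAt.fun_sum fun i _ => ?_
  refine (((q i).hasDerivAt z).fun_mul ((α i).hasDerivAt z).cexp).congr_deriv ?_
  rw [eval_add, eval_mul]
  ring

theorem expPoly_derivative_add_mul_eq_zero {s : Finset ι} {q : ι → ℂ[X]} {α : ι → ℂ[X]}
    (β : ℂ[X]) (h : expPoly s q α = 0) :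
    expPoly s (fun i => derivative (q i) + (derivative (α i) - β) * q i) α = 0 := by
  funext z
  have hderiv : expPoly s (fun i => derivative (q i) + derivative (α i) * q i) α z = 0 :=
    (hasDerivAt_expPoly s q α z).unique (h ▸ hasDerivAt_const z 0)
  calc expPoly s (fun i => derivative (q i) + (derivative (α i) - β) * q i) α z
      = expPoly s (fun i => derivative (q i) + derivative (α i) * q i) α z
          - β.eval z * expPoly s q α z := by
        simp only [expPoly, Finset.mul_sum, ← Finset.sum_sub_distrib, eval_add, eval_mul,
          eval_sub]
        exact Finset.sum_congr rfl fun i _ => by ring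
    _ = 0 := by rw [hderiv, h, Pi.zero_apply, mul_zero, sub_zero]

theorem expPoly_iterate_derivative_add_mul_eq_zero {s : Finset ι} {q : ι → ℂ[X]}
    {α : ι → ℂ[X]} (β : ℂ[X]) (h : expPoly s q α = 0) (N : ℕ) :
    expPoly s (fun i => (fun p => derivative p + (derivative (α i) - β) * p)^[N] (q i)) α
      = 0 := by
  induction N with
  | zero => exact h
  | succ N ih =>
    simp only [Function.iterate_succ_apply']
    exact expPoly_derivative_add_mul_eq_zero β ih

/-- Borel's theorem for polynomial coefficients. -/
theorem eq_zero_of_expPoly_eq_zero {s : Finset ι} {q α : ι → ℂ[X]}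
    (hα : (s : Set ι).Pairwise fun i j => 0 < (α i - α j).natDegree)
    (h : expPoly s q α = 0) : ∀ i ∈ s, q i = 0 := by
  classical
  induction s using Finset.induction_on generalizing q with
  | empty => simp
  | insert a s ha ih =>
    rw [Finset.coe_insert, Set.pairwise_insert] at hα
    set r : ι → ℂ[X] := fun i =>
      (fun p => derivative p + (derivative (α i) - derivative (α a)) * p)^[(q a).natDegree + 1]
        (q i)
    have hr : expPoly (insert a s) r α = 0 :=
      expPoly_iterate_derivative_add_mul_eq_zero _ h _
    have hra : r a = 0 := by
      simp only [r, sub_self, zero_mul, add_zero]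
      exact iterate_derivative_eq_zero (Nat.lt_succ_self _)
    have hrs : expPoly s r α = 0 := by
      funext z
      simpa [expPoly, Finset.sum_insert ha, hra] using congrFun hr z
    have hqs : ∀ i ∈ s, q i = 0 := by
      intro i hi
      by_contra hqi
      have hc : derivative (α i) - derivative (α a) ≠ 0 := by
        rw [← derivative_sub]
        intro h0
        have := (hα.2 i hi (by rintro rfl; exact ha hi)).2
        rw [derivative_eq_zero.mp h0] at this
        exact this.false
      exact iterate_derivative_add_mul_ne_zero hc hqi _ (ih hα.1 hrs i hi)
    have hqa : q a = 0 := by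
      refine Polynomial.funext fun z => ?_
      have hz := congrFun h z
      have hrest : ∑ i ∈ s, (q i).eval z * Complex.exp ((α i).eval z) = 0 :=
        Finset.sum_eq_zero fun i hi => by rw [hqs i hi, eval_zero, zero_mul]
      simp only [expPoly, Finset.sum_insert ha, hrest, add_zero, Pi.zero_apply] at hz
      simpa [Complex.exp_ne_zero] using hz
    exact Finset.forall_mem_insert _ _ _ |>.mpr ⟨hqa, hqs⟩

end ExpPoly

section Cofinite

variable {X Y : Type*} [TopologicalSpace X] [T1Space X] {g h : X → Y}

theorem Filter.EventuallyEq.eventually_eventuallyEq_nhds_of_cofinite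
    (hgh : g =ᶠ[cofinite] h) : ∀ᶠ z in cofinite, g =ᶠ[𝓝 z] h := by
  have hopen : IsOpen {z | g z = h z} := by
    rw [← isClosed_compl_iff, Set.compl_ofPred]
    exact (eventually_cofinite.mp hgh).isClosed
  filter_upwards [hgh] with z hz using hopen.mem_nhds hz

theorem Continuous.eq_of_eventuallyEq_cofinite [∀ x : X, NeBot (𝓝[≠] x)] [TopologicalSpace Y]
    [T2Space Y] (hg : Continuous g) (hh : Continuous h) (hgh : g =ᶠ[cofinite] h) : g = h :=
  funext fun z => tendsto_nhds_unique_of_eventuallyEq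
    ((hg.tendsto z).mono_left nhdsWithin_le_nhds) ((hh.tendsto z).mono_left nhdsWithin_le_nhds)
    (hgh.filter_mono (nhdsNE_le_cofinite z))

end Cofinite

/-- Working modulo finite sets, poles and removable singularities need no bookkeeping. -/
def eventuallyRational : Subalgebra ℂ (ℂ → ℂ) where
  carrier := {g | ∃ A B : ℂ[X], B ≠ 0 ∧ g =ᶠ[cofinite] fun z => A.eval z / B.eval z}
  mul_mem' := by
    rintro g h ⟨A₁, B₁, hB₁, hg⟩ ⟨A₂, B₂, hB₂, hh⟩
    refine ⟨A₁ * A₂, B₁ * B₂, mul_ne_zero hB₁ hB₂, ?_⟩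
    filter_upwards [hg, hh] with z hgz hhz
    simp only [Pi.mul_apply, hgz, hhz, eval_mul, div_mul_div_comm]
  add_mem' := by
    rintro g h ⟨A₁, B₁, hB₁, hg⟩ ⟨A₂, B₂, hB₂, hh⟩
    refine ⟨A₁ * B₂ + A₂ * B₁, B₁ * B₂, mul_ne_zero hB₁ hB₂, ?_⟩
    filter_upwards [hg, hh, eventually_cofinite_eval_ne_zero hB₁,
      eventually_cofinite_eval_ne_zero hB₂] with z hgz hhz hB₁z hB₂z
    simp only [Pi.add_apply, hgz, hhz, eval_add, eval_mul]
    field_simp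
  algebraMap_mem' c := ⟨C c, 1, one_ne_zero, .of_forall fun z => by simp⟩

theorem IsRat.mem_eventuallyRational {q : ℂ → ℂ} (hq : IsRat q) :
    q ∈ eventuallyRational := by
  obtain ⟨A, B, hB, hAB⟩ := hq
  exact ⟨A, B, hB, (eventually_cofinite_eval_ne_zero hB).mono hAB⟩

theorem mem_eventuallyRational_of_eventuallyEq {g h : ℂ → ℂ} (hh : h ∈ eventuallyRational)
    (hgh : g =ᶠ[cofinite] h) : g ∈ eventuallyRational := by
  obtain ⟨A, B, hB, hAB⟩ := hh
  exact ⟨A, B, hB, hgh.trans hAB⟩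

theorem deriv_mem_eventuallyRational {g : ℂ → ℂ} (hg : g ∈ eventuallyRational) :
    deriv g ∈ eventuallyRational := by
  obtain ⟨A, B, hB, hAB⟩ := hg
  refine ⟨derivative A * B - A * derivative B, B ^ 2, pow_ne_zero 2 hB, ?_⟩
  filter_upwards [hAB.eventually_eventuallyEq_nhds_of_cofinite,
    eventually_cofinite_eval_ne_zero hB] with z hz hBz
  rw [hz.deriv_eq, ((A.hasDerivAt z).fun_div (B.hasDerivAt z) hBz).deriv]
  simp only [eval_mul, eval_sub, eval_pow]

theorem iteratedDeriv_mem_eventuallyRational {g : ℂ → ℂ} (hg : g ∈ eventuallyRational)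
    (n : ℕ) : iteratedDeriv n g ∈ eventuallyRational := by
  induction n with
  | zero => rwa [iteratedDeriv_zero]
  | succ n ih => rw [iteratedDeriv_succ]; exact deriv_mem_eventuallyRational ih

theorem IsDiffPolyOp.apply_mem_eventuallyRational {d : ℕ} {Q : (ℂ → ℂ) → ℂ → ℂ}
    (hQ : IsDiffPolyOp d Q) {f : ℂ → ℂ} (hf : f ∈ eventuallyRational) :
    Q f ∈ eventuallyRational := by
  obtain ⟨m, L, a, ha, -, S, hS, hQS⟩ := hQ
  have hsum : ∑ lam ∈ L, a lam * ∏ i : Fin (m + 1), iteratedDeriv i f ^ lam i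
      ∈ eventuallyRational :=
    Subalgebra.sum_mem _ fun lam hlam =>
      Subalgebra.mul_mem _ (ha lam hlam).mem_eventuallyRational
      (Subalgebra.prod_mem _ fun i _ =>
        Subalgebra.pow_mem _ (iteratedDeriv_mem_eventuallyRational hf i) _)
  refine mem_eventuallyRational_of_eventuallyEq hsum (hS.eventually_cofinite_notMem.mono ?_)
  intro z hz
  simp only [hQS f z hz, Finset.sum_apply, Pi.mul_apply, Finset.prod_apply, Pi.pow_apply]

theorem IsNZRat.isRat {q : ℂ → ℂ} (hq : IsNZRat q) : IsRat q :=
  let ⟨A, B, _, hB, hAB⟩ := hq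
  ⟨A, B, hB, hAB⟩

theorem IsNZRat.not_eventuallyEq_zero {q : ℂ → ℂ} (hq : IsNZRat q) :
    ¬q =ᶠ[cofinite] 0 := by
  obtain ⟨A, B, hA, hB, hAB⟩ := hq
  intro h0
  have hfalse : ∀ᶠ _ : ℂ in cofinite, False := by
    filter_upwards [h0, eventually_cofinite_eval_ne_zero hA,
      eventually_cofinite_eval_ne_zero hB] with z hz hAz hBz
    rw [Pi.zero_apply, hAB z hBz] at hz
    exact div_ne_zero hAz hBz hz
  exact hfalse.exists.elim fun _ h => h

theorem eventuallyEq_zero_of_sum_mul_exp_eventuallyEq_zero {ι : Type*} [Fintype ι]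
    {r : ι → ℂ → ℂ} (hr : ∀ i, r i ∈ eventuallyRational) {α : ι → ℂ[X]}
    (hα : Pairwise fun i j => 0 < (α i - α j).natDegree)
    (h : (fun z => ∑ i, r i z * Complex.exp ((α i).eval z)) =ᶠ[cofinite] 0) (i : ι) :
    r i =ᶠ[cofinite] 0 := by
  classical
  choose A B hB hAB using hr
  set q : ι → ℂ[X] := fun i => A i * ∏ j ∈ univ.erase i, B j
  have hq : expPoly univ q α = 0 := by
    refine (continuous_expPoly _ _ _).eq_of_eventuallyEq_cofinite continuous_const ?_
    filter_upwards [h, eventually_all.mpr hAB,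
      eventually_all.mpr fun j => eventually_cofinite_eval_ne_zero (hB j)] with z hz hABz hBz
    calc expPoly univ q α z
        = (∏ j, (B j).eval z) * ∑ i, r i z * Complex.exp ((α i).eval z) := by
          simp only [expPoly, mul_sum, q, eval_mul, eval_prod, hABz]
          refine sum_congr rfl fun i _ => ?_
          rw [← mul_prod_erase univ (fun j => (B j).eval z) (mem_univ i)]
          field_simp [hBz i]
      _ = 0 := by rw [hz, Pi.zero_apply, mul_zero]
  have hAi : A i = 0 := by
    have hqi := eq_zero_of_expPoly_eq_zero (hα.set_pairwise _) hq i (mem_univ i)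
    exact (mul_eq_zero.mp hqi).resolve_right (prod_ne_zero_iff.mpr fun j _ => hB j)
  filter_upwards [hAB i] with z hz
  simp [hz, hAi]

theorem stmt_6_general (a : ℂ) (n d k : ℕ) (hk : 1 ≤ k)
    (p : Fin k → ℂ → ℂ) (hp : ∀ i, IsNZRat (p i))
    (α : Fin k → Polynomial ℂ) (hα : ∀ i, 0 < (α i).natDegree)
    (hαij : ∀ i j, i ≠ j → 1 ≤ ((α i) - (α j)).natDegree)
    (Q : (ℂ → ℂ) → ℂ → ℂ) (hQ : IsDiffPolyOp d Q) :
    ∀ f : ℂ → ℂ, IsRat f →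
      ¬ EqOffFinite (fun z => f z ^ n + a * f z ^ (n - 2) * deriv f z + Q f z)
        (fun z => ∑ i, p i z * Complex.exp ((α i).eval z)) := by
  rintro f hf ⟨S, hS, hE⟩
  set lhs : ℂ → ℂ := fun z => f z ^ n + a * f z ^ (n - 2) * deriv f z + Q f z
  have hf' := hf.mem_eventuallyRational
  have hlhs : lhs ∈ eventuallyRational :=
    add_mem (add_mem (pow_mem hf' n) (mul_mem (mul_mem (algebraMap_mem _ a) (pow_mem hf' _))
      (deriv_mem_eventuallyRational hf'))) (hQ.apply_mem_eventuallyRational hf')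
  -- the left-hand side joins the exponential sum as the coefficient of `exp 0`
  let r : Option (Fin k) → ℂ → ℂ := fun o => o.elim (-lhs) p
  let β : Option (Fin k) → ℂ[X] := fun o => o.elim 0 α
  have hr : ∀ o, r o ∈ eventuallyRational := by
    rintro (_ | i)
    exacts [neg_mem hlhs, (hp i).isRat.mem_eventuallyRational]
  have hβ : Pairwise fun i j => 0 < (β i - β j).natDegree := by
    rintro (_ | i) (_ | j) hij
    · exact absurd rfl hij
    · simpa [β] using hα j
    · simpa [β] using hα i
    · exact hαij i j fun h => hij (congrArg some h)
  have hsum : (fun z => ∑ o, r o z * Complex.exp ((β o).eval z)) =ᶠ[cofinite] 0 := by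
    filter_upwards [hS.eventually_cofinite_notMem] with z hz
    simp [Fintype.sum_option, r, β, lhs, hE z hz]
  exact (hp ⟨0, hk⟩).not_eventuallyEq_zero
    (eventuallyEq_zero_of_sum_mul_exp_eventuallyEq_zero hr hβ hsum (some ⟨0, hk⟩))

/-- every meromorphic solution of equation (2.1) is transcendental,
i.e. no rational function solves it. -/
theorem stmt_6 (a : ℂ) (n d k : ℕ) (hn : 2 ≤ n) (hk : 1 ≤ k)
    (p : Fin k → ℂ → ℂ) (hp : ∀ i, IsNZRat (p i))
    (α : Fin k → Polynomial ℂ) (hα : ∀ i, 0 < (α i).natDegree)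
    (hαij : ∀ i j, i ≠ j → 1 ≤ ((α i) - (α j)).natDegree)
    (Q : (ℂ → ℂ) → ℂ → ℂ) (hQ : IsDiffPolyOp d Q) :
    ∀ f : ℂ → ℂ, IsRat f →
      ¬ EqOffFinite (fun z => f z ^ n + a * f z ^ (n - 2) * deriv f z + Q f z)
        (fun z => ∑ i, p i z * Complex.exp ((α i).eval z)) :=
  stmt_6_general a n d k hk p hp α hα hαij Q hQ
end

section
/- Let m ≥ 1 be an integer, let β₁,…,β_m be non-constant complex polynomials such that deg(β_i − β_j) ≥ 1 for all 1 ≤ i ≠ j ≤ m, and let q₀, q₁, …, q_m be rational functions. If Σ_{j=1}^{m} q_j(z)·exp(β_j(z)) = q₀(z) holds for all z ∈ ℂ outside the finitely many poles of the q_j, then q₀ ≡ q₁ ≡ ⋯ ≡ q_m ≡ 0. -/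
open Complex Polynomial Finset

open Filter

/-
Clearing denominators turns the identity into `∑ P_j e^{β_j} = 0` with polynomial `P_j` (the
term `-q₀` getting the exponent `0`). Such a relation forces all `P_j = 0`, by induction on the
number of terms: after dividing by `e^{β_a}`, the term `P_a` has exponent `0`, and differentiating
`deg P_a + 1` times kills it, while every other term `P_j e^{γ_j}` becomes `Q_j e^{γ_j}` with
`Q_j = P_j' + P_j γ_j'`, which vanishes only if `P_j` does, since `γ_j` is non-constant.
-/

lemma eqOffFinite_iff_eventuallyEq {g h : ℂ → ℂ} :
    EqOffFinite g h ↔ g =ᶠ[cofinite] h := by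
  refine ⟨fun ⟨S, hS, hgh⟩ => eventually_cofinite.2 (hS.subset fun z hz => ?_),
    fun hgh => ⟨_, hgh, fun z hz => not_not.1 hz⟩⟩
  by_contra hzS
  exact hz (hgh z hzS)

lemma eventually_cofinite_eq_zero_of_hasDerivAt {𝕜 F : Type*} [NontriviallyNormedField 𝕜]
    [NormedAddCommGroup F] [NormedSpace 𝕜 F] {f f' : 𝕜 → F}
    (hf : ∀ z, HasDerivAt f (f' z) z) (h : ∀ᶠ z in cofinite, f z = 0) :
    ∀ᶠ z in cofinite, f' z = 0 := by
  have hopen : IsOpen {z | f z = 0} := by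
    rw [← compl_compl {z | f z = 0}]
    exact (eventually_cofinite.1 h).isClosed.isOpen_compl
  filter_upwards [h] with z hz
  exact (hf z).unique ((hasDerivAt_const z 0).congr_of_eventuallyEq (hopen.eventually_mem hz))

namespace Polynomial

section CommRing

variable {R : Type*} [CommRing R]

lemma eq_zero_of_eventually_cofinite_eval_eq_zero [IsDomain R] [Infinite R] {p : R[X]}
    (h : ∀ᶠ z in cofinite, p.eval z = 0) : p = 0 :=
  p.eq_zero_of_infinite_isRoot (frequently_cofinite_iff_infinite.1 h.frequently)

lemma eventually_cofinite_eval_ne_zero_s7 [IsDomain R] {p : R[X]} (hp : p ≠ 0) :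
    ∀ᶠ z in cofinite, p.eval z ≠ 0 :=
  eventually_cofinite.2 (by simpa using p.finite_setOfPred_isRoot hp)

/-- The polynomial part of the derivative of `Q e^γ`. -/
noncomputable def twistedDerivative (γ Q : R[X]) : R[X] :=
  derivative Q + Q * derivative γ

@[simp]
lemma twistedDerivative_zero_left : twistedDerivative (0 : R[X]) = derivative := by
  ext1 Q
  simp [twistedDerivative]

@[simp]
lemma twistedDerivative_zero_right (γ : R[X]) : twistedDerivative γ 0 = 0 := by
  simp [twistedDerivative]

lemma twistedDerivative_ne_zero [IsDomain R] {γ Q : R[X]} (hγ : derivative γ ≠ 0)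
    (hQ : Q ≠ 0) :
    twistedDerivative γ Q ≠ 0 := by
  have hlt : (derivative Q).degree < (Q * derivative γ).degree :=
    calc (derivative Q).degree < Q.degree := degree_derivative_lt hQ
      _ ≤ (Q * derivative γ).degree := by
        rw [degree_mul]
        exact le_add_of_nonneg_right (zero_le_degree_iff.2 hγ)
  rw [twistedDerivative, ← degree_ne_bot, degree_add_eq_right_of_degree_lt hlt, degree_ne_bot]
  exact mul_ne_zero hQ hγ

lemma iterate_twistedDerivative_eq_zero_iff [IsDomain R] {γ Q : R[X]} (hγ : derivative γ ≠ 0)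
    (k : ℕ) :
    (twistedDerivative γ)^[k] Q = 0 ↔ Q = 0 := by
  induction k with
  | zero => rfl
  | succ k ih =>
    rw [Function.iterate_succ_apply', ← ih]
    exact ⟨not_imp_not.1 (twistedDerivative_ne_zero hγ), fun h => by simp [h]⟩

end CommRing

lemma hasDerivAt_eval_mul_exp (γ Q : ℂ[X]) (z : ℂ) :
    HasDerivAt (fun w => Q.eval w * exp (γ.eval w))
      ((twistedDerivative γ Q).eval z * exp (γ.eval z)) z := by
  refine ((Q.hasDerivAt z).fun_mul (γ.hasDerivAt z).cexp).congr_deriv ?_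
  simp only [twistedDerivative, eval_add, eval_mul]
  ring

end Polynomial

section ExpPolynomialSums

variable {ι : Type*} {s : Finset ι} {γ P : ι → ℂ[X]}

lemma eventually_sum_twistedDerivative_mul_exp_eq_zero
    (h : ∀ᶠ z in cofinite, ∑ j ∈ s, (P j).eval z * exp ((γ j).eval z) = 0) :
    ∀ᶠ z in cofinite,
      ∑ j ∈ s, (twistedDerivative (γ j) (P j)).eval z * exp ((γ j).eval z) = 0 :=
  eventually_cofinite_eq_zero_of_hasDerivAt
    (fun z => HasDerivAt.fun_sum fun j _ => hasDerivAt_eval_mul_exp (γ j) (P j) z) h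

lemma eventually_sum_iterate_twistedDerivative_mul_exp_eq_zero
    (h : ∀ᶠ z in cofinite, ∑ j ∈ s, (P j).eval z * exp ((γ j).eval z) = 0) (k : ℕ) :
    ∀ᶠ z in cofinite,
      ∑ j ∈ s, ((twistedDerivative (γ j))^[k] (P j)).eval z * exp ((γ j).eval z) = 0 := by
  induction k with
  | zero => exact h
  | succ k ih =>
    simp only [Function.iterate_succ_apply']
    exact eventually_sum_twistedDerivative_mul_exp_eq_zero ih

theorem eq_zero_of_eventually_sum_mul_exp_eq_zero [DecidableEq ι] (s : Finset ι)
    (β P : ι → ℂ[X]) (hβ : (s : Set ι).Pairwise fun i j => 0 < (β i - β j).natDegree)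
    (h : ∀ᶠ z in cofinite, ∑ j ∈ s, (P j).eval z * exp ((β j).eval z) = 0) :
    ∀ j ∈ s, P j = 0 := by
  induction s using Finset.induction_on generalizing β P with
  | empty => simp
  | insert a s ha ih =>
    rw [coe_insert, Set.pairwise_insert] at hβ
    set γ := fun j => β j - β a
    have hγ :
        ∀ᶠ z in cofinite, ∑ j ∈ insert a s, (P j).eval z * exp ((γ j).eval z) = 0 := by
      filter_upwards [h] with z hz
      simp only [γ, eval_sub, exp_sub, mul_div_assoc', ← Finset.sum_div, hz, zero_div]
    set N := (P a).natDegree + 1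
    have hQa : (twistedDerivative (γ a))^[N] (P a) = 0 := by
      simp only [γ, sub_self, twistedDerivative_zero_left]
      exact iterate_derivative_eq_zero (Nat.lt_succ_self _)
    have hs : ∀ j ∈ s, P j = 0 := by
      intro j hj
      have hja : j ≠ a := ne_of_mem_of_not_mem hj ha
      have hγj : derivative (γ j) ≠ 0 := derivative_ne_zero.2 (hβ.2 j hj hja.symm).2.ne'
      refine (iterate_twistedDerivative_eq_zero_iff hγj N).1
        (ih γ (fun j => (twistedDerivative (γ j))^[N] (P j)) ?_ ?_ j hj)
      · simpa only [γ, sub_sub_sub_cancel_right] using hβ.1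
      · simpa [sum_insert ha, hQa] using
          eventually_sum_iterate_twistedDerivative_mul_exp_eq_zero hγ N
    have ha' : P a = 0 := by
      refine eq_zero_of_eventually_cofinite_eval_eq_zero ?_
      filter_upwards [h] with z hz
      rw [sum_insert ha, sum_eq_zero fun j hj => by rw [hs j hj, eval_zero, zero_mul],
        add_zero] at hz
      exact (mul_eq_zero.1 hz).resolve_right (exp_ne_zero _)
    simpa [ha'] using hs

end ExpPolynomialSums

lemma IsRat.exists_eventually_mul_eq {q : ℂ → ℂ} (hq : IsRat q) :
    ∃ A B : ℂ[X], B ≠ 0 ∧ ∀ᶠ z in cofinite, B.eval z * q z = A.eval z := by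
  obtain ⟨A, B, hB, hAB⟩ := hq
  refine ⟨A, B, hB, ?_⟩
  filter_upwards [eventually_cofinite_eval_ne_zero_s7 hB] with z hz
  rw [hAB z hz, mul_div_cancel₀ _ hz]

lemma IsRat.neg {q : ℂ → ℂ} (hq : IsRat q) : IsRat (-q) := by
  obtain ⟨A, B, hB, hAB⟩ := hq
  exact ⟨-A, B, hB, fun z hz => by simp [hAB z hz, neg_div]⟩

lemma exists_common_denominator {ι : Type*} [Fintype ι] [DecidableEq ι] {q : ι → ℂ → ℂ}
    (hq : ∀ j, IsRat (q j)) :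
    ∃ D : ℂ[X], D ≠ 0 ∧
      ∃ P : ι → ℂ[X], ∀ j, ∀ᶠ z in cofinite, D.eval z * q j z = (P j).eval z := by
  choose A B hB hAB using fun j => (hq j).exists_eventually_mul_eq
  refine ⟨∏ j, B j, prod_ne_zero_iff.2 fun j _ => hB j,
    fun j => A j * ∏ k ∈ univ.erase j, B k, fun j => ?_⟩
  filter_upwards [hAB j] with z hz
  rw [← mul_prod_erase univ B (mem_univ j)]
  simp only [eval_mul, ← hz]
  ring

theorem stmt_7_general (m : ℕ)
    (β : Fin m → Polynomial ℂ) (hβ : ∀ j, 0 < (β j).natDegree)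
    (hβij : ∀ i j, i ≠ j → 1 ≤ ((β i) - (β j)).natDegree)
    (q₀ : ℂ → ℂ) (q : Fin m → ℂ → ℂ)
    (hq₀ : IsRat q₀) (hq : ∀ j, IsRat (q j))
    (heq : EqOffFinite (fun z => ∑ j, q j z * Complex.exp ((β j).eval z)) q₀) :
    EqOffFinite q₀ (fun _ => 0) ∧ ∀ j, EqOffFinite (q j) (fun _ => 0) := by
  set q' : Option (Fin m) → ℂ → ℂ := fun o => o.elim (-q₀) q
  set β' : Option (Fin m) → ℂ[X] := fun o => o.elim 0 β
  obtain ⟨D, hD, P, hP⟩ :=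
    exists_common_denominator (q := q') (by rintro (_ | j) <;> simp [q', hq₀.neg, hq])
  have hβ' : ((univ : Finset (Option (Fin m))) : Set (Option (Fin m))).Pairwise
      fun i j => 0 < (β' i - β' j).natDegree := by
    rw [coe_univ, Set.pairwise_univ]
    rintro (_ | i) (_ | j) hij
    · exact absurd rfl hij
    · simpa [β'] using hβ j
    · simpa [β'] using hβ i
    · exact hβij i j fun h => hij (congrArg some h)
  have hsum : ∀ᶠ z in cofinite, ∑ o, (P o).eval z * exp ((β' o).eval z) = 0 := by
    filter_upwards [eqOffFinite_iff_eventuallyEq.1 heq, eventually_all.2 hP] with z hz hPz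
    simp only [← hPz, mul_assoc, ← mul_sum, Fintype.sum_option, q', β', Option.elim, hz]
    simp
  have hP_zero := eq_zero_of_eventually_sum_mul_exp_eq_zero univ β' P hβ' hsum
  have hq'_zero : ∀ o, q' o =ᶠ[cofinite] 0 := fun o => by
    filter_upwards [hP o, eventually_cofinite_eval_ne_zero_s7 hD] with z hz hDz
    simpa [hP_zero o (mem_univ o), hDz] using hz
  have hq₀_zero : q₀ =ᶠ[cofinite] 0 := by simpa [q'] using (hq'_zero none).neg
  exact ⟨eqOffFinite_iff_eventuallyEq.2 hq₀_zero,
    fun j => eqOffFinite_iff_eventuallyEq.2 (hq'_zero (some j))⟩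

/-- Borel-type lemma, Lemma 3.3, for rational coefficients and
polynomial exponents. -/
theorem stmt_7 (m : ℕ) (hm : 1 ≤ m)
    (β : Fin m → Polynomial ℂ) (hβ : ∀ j, 0 < (β j).natDegree)
    (hβij : ∀ i j, i ≠ j → 1 ≤ ((β i) - (β j)).natDegree)
    (q₀ : ℂ → ℂ) (q : Fin m → ℂ → ℂ)
    (hq₀ : IsRat q₀) (hq : ∀ j, IsRat (q j))
    (heq : EqOffFinite (fun z => ∑ j, q j z * Complex.exp ((β j).eval z)) q₀) :
    EqOffFinite q₀ (fun _ => 0) ∧ ∀ j, EqOffFinite (q j) (fun _ => 0) :=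
  stmt_7_general m β hβ hβij q₀ q hq₀ hq heq
end

section
/- The entire function f(z) = e^z + 1 satisfies, for every z ∈ ℂ, the identity f(z)³ + 4·f′(z)·f(z) + f′(z) − f(z) = e^{3z} + 7·e^{2z} + 7·e^{z}; moreover, there is no constant a₁ ∈ ℂ with f(z) = a₁·e^{z} for all z ∈ ℂ. (Hence f is a transcendental entire solution of an equation of the type in Xue's theorem that is not of the form predicted there, disproving that theorem.) -/
open Complex

/-- counterexample to Xue's theorem: `f(z) = e^z + 1` is an entire
solution of `f³ + 4f'f + f' − f = e^{3z} + 7e^{2z} + 7e^z` which is not of the form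
`a₁ e^z`. -/
theorem stmt_8 :
    (∀ z : ℂ,
      (Complex.exp z + 1) ^ 3
        + 4 * deriv (fun w => Complex.exp w + 1) z * (Complex.exp z + 1)
        + deriv (fun w => Complex.exp w + 1) z - (Complex.exp z + 1)
      = Complex.exp (3 * z) + 7 * Complex.exp (2 * z) + 7 * Complex.exp z) ∧
    ¬ ∃ a₁ : ℂ, ∀ z : ℂ, Complex.exp z + 1 = a₁ * Complex.exp z := by
  constructor
  · intro z
    have hd : deriv (fun w => Complex.exp w + 1) z = Complex.exp z := by
      simp
    rw [hd, show (3 : ℂ) * z = z + z + z by ring, show (2 : ℂ) * z = z + z by ring,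
      Complex.exp_add, Complex.exp_add]
    ring
  · rintro ⟨a₁, h⟩
    have h0 := h 0
    have h1 := h (Complex.log 2)
    rw [Complex.exp_log (by norm_num)] at h1
    simp at h0
    rw [← h0] at h1
    norm_num at h1
end

section
/- The entire function f(z) = e^z + z + 1 satisfies, for every z ∈ ℂ, the identity f(z)⁴ − 6(z+1)²·(f″(z))² − 3(z+1)³·f″(z) − (z+1)³·f(z) = e^{4z} + 4(z+1)·e^{3z}; moreover, there do not exist a non-vanishing rational function q and a polynomial P with f(z) = q(z)·e^{P(z)} for all z ∈ ℂ outside the poles of q. (This shows that in part (I) of the main theorem the degree bound d ≤ n−k−1 cannot be relaxed to d ≤ n−k: here k = 2, n = 4, d = 2.) -/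
open Complex Polynomial

lemma iter2 (z : ℂ) : iteratedDeriv 2 (fun w => Complex.exp w + w + 1) z = Complex.exp z := by
  have hd1 : deriv (fun w => Complex.exp w + w + 1) = fun w => Complex.exp w + 1 := by
    funext x
    exact (((Complex.hasDerivAt_exp x).add (hasDerivAt_id x)).add_const 1).deriv
  have hd2 : ∀ x : ℂ, deriv (fun w => Complex.exp w + 1) x = Complex.exp x := fun x =>
    ((Complex.hasDerivAt_exp x).add_const 1).deriv
  rw [show (2:ℕ) = 1 + 1 from rfl, iteratedDeriv_succ, iteratedDeriv_succ, iteratedDeriv_zero,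
    hd1]
  exact hd2 z

/-- `f(z) = e^z + z + 1` solves
`f⁴ − 6(z+1)²(f'')² − 3(z+1)³f'' − (z+1)³f = e^{4z} + 4(z+1)e^{3z}`,
but is not of the form `q(z)e^{P(z)}` with `q` a non-vanishing rational function and `P`
a polynomial. -/
theorem stmt_12 :
    (∀ z : ℂ,
      (Complex.exp z + z + 1) ^ 4
        - 6 * (z + 1) ^ 2 * (iteratedDeriv 2 (fun w => Complex.exp w + w + 1) z) ^ 2
        - 3 * (z + 1) ^ 3 * iteratedDeriv 2 (fun w => Complex.exp w + w + 1) z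
        - (z + 1) ^ 3 * (Complex.exp z + z + 1)
      = Complex.exp (4 * z) + 4 * (z + 1) * Complex.exp (3 * z)) ∧
    ¬ ∃ (q : ℂ → ℂ) (P : Polynomial ℂ), IsNZRat q ∧
        EqOffFinite (fun z => Complex.exp z + z + 1)
          (fun z => q z * Complex.exp (P.eval z)) := by
  constructor
  · intro z
    have h4 : Complex.exp (4 * z) = Complex.exp z ^ 4 := by
      rw [show (4:ℂ) * z = z + z + z + z by ring, Complex.exp_add, Complex.exp_add,
        Complex.exp_add]; ring
    have h3 : Complex.exp (3 * z) = Complex.exp z ^ 3 := by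
      rw [show (3:ℂ) * z = z + z + z by ring, Complex.exp_add, Complex.exp_add]; ring
    rw [iter2, h3, h4]; ring
  · rintro ⟨q, P, ⟨A, B, hA, hB, hq⟩, S, hSfin, hS⟩
    set g : ℂ → ℂ := fun z => B.eval z * (Complex.exp z + z + 1) with hgdef
    set h : ℂ → ℂ := fun z => A.eval z * Complex.exp (P.eval z) with hhdef
    have hT : (S ∪ {x | B.IsRoot x}).Finite := hSfin.union (B.finite_setOf_isRoot hB)
    have hdense : Dense (S ∪ {x | B.IsRoot x})ᶜ := hT.countable.dense_compl ℂ
    have heq : Set.EqOn g h (S ∪ {x | B.IsRoot x})ᶜ := by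
      intro z hz
      simp only [Set.compl_union, Set.mem_inter_iff, Set.mem_compl_iff,
        Set.mem_setOf_eq] at hz
      obtain ⟨hzS, hzB⟩ := hz
      have h1 : Complex.exp z + z + 1 = q z * Complex.exp (P.eval z) := hS z hzS
      have h2 := hq z hzB
      simp only [hgdef, hhdef]
      have hzB' : B.eval z ≠ 0 := hzB
      rw [h1, h2]
      field_simp
    have hgh : g = h :=
      Continuous.ext_on hdense (by fun_prop) (by fun_prop) heq
    have hder : ∀ z : ℂ,
        (derivative B).eval z * (Complex.exp z + z + 1) + B.eval z * (Complex.exp z + 1)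
          = (derivative A).eval z * Complex.exp (P.eval z)
            + A.eval z * (Complex.exp (P.eval z) * (derivative P).eval z) := by
      intro z
      have hg' : HasDerivAt g
          ((derivative B).eval z * (Complex.exp z + z + 1) + B.eval z * (Complex.exp z + 1)) z :=
        (B.hasDerivAt z).mul (((Complex.hasDerivAt_exp z).add (hasDerivAt_id z)).add_const 1)
      have hh' : HasDerivAt h
          ((derivative A).eval z * Complex.exp (P.eval z)
            + A.eval z * (Complex.exp (P.eval z) * (derivative P).eval z)) z :=
        (A.hasDerivAt z).mul ((P.hasDerivAt z).cexp)
      exact hg'.unique (hgh ▸ hh')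
    set C : Polynomial ℂ := A * B + A * derivative B - derivative A * B - A * derivative P * B
      with hCdef
    have key : ∀ z : ℂ, C.eval z * (Complex.exp z + z + 1) = z * (A.eval z * B.eval z) := by
      intro z
      have e1 : B.eval z * (Complex.exp z + z + 1) = A.eval z * Complex.exp (P.eval z) :=
        congrFun hgh z
      have e2 := hder z
      simp only [hCdef, eval_mul, eval_add, eval_sub]
      linear_combination (A.eval z) * e2 -
        ((derivative A).eval z + A.eval z * (derivative P).eval z) * e1
    set E : Polynomial ℂ := X * (A * B) - (X + 1) * C with hEdef
    have key2 : ∀ z : ℂ, C.eval z * Complex.exp z = E.eval z := by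
      intro z
      simp only [hEdef, eval_sub, eval_mul, eval_add, eval_X, eval_one]
      linear_combination key z
    have hCE : C = E := by
      have hinf : {x : ℂ | (C - E).IsRoot x}.Infinite := by
        apply Set.infinite_of_injective_forall_mem
          (f := fun k : ℕ => (k : ℂ) * (2 * Real.pi * I))
        · intro a b hab
          have h2pi : (2 * (Real.pi : ℂ) * I) ≠ 0 := by
            simp [Real.pi_ne_zero, Complex.I_ne_zero]
          have := mul_right_cancel₀ h2pi hab
          exact_mod_cast this
        · intro k
          simp only [Set.mem_setOf_eq, IsRoot, eval_sub]
          have hk := key2 ((k : ℂ) * (2 * Real.pi * I))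
          rw [show ((k : ℂ)) * (2 * Real.pi * I) = ((k : ℤ) : ℂ) * (2 * Real.pi * I) by
                push_cast; ring,
            Complex.exp_int_mul_two_pi_mul_I] at hk
          linear_combination hk
      exact sub_eq_zero.mp (Polynomial.eq_zero_of_infinite_isRoot _ hinf)
    have natinj : Function.Injective (fun k : ℕ => ((k : ℂ) + 1)) := by
      intro a b hab
      simp only [add_left_inj] at hab
      exact_mod_cast hab
    have hexpne : ∀ k : ℕ, Complex.exp ((k : ℂ) + 1) ≠ 1 := by
      intro k hcontra
      have : Complex.exp ((k : ℂ) + 1) = ((Real.exp ((k : ℝ) + 1) : ℝ) : ℂ) := by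
        rw [Complex.ofReal_exp]; push_cast; ring_nf
      rw [this] at hcontra
      have : Real.exp ((k : ℝ) + 1) = 1 := by exact_mod_cast hcontra
      rw [Real.exp_eq_one_iff] at this
      have : (0:ℝ) < (k : ℝ) + 1 := by positivity
      linarith
    have hC0 : C = 0 := by
      apply Polynomial.eq_zero_of_infinite_isRoot
      apply Set.infinite_of_injective_forall_mem (f := fun k : ℕ => ((k : ℂ) + 1)) natinj
      intro k
      simp only [Set.mem_setOf_eq, IsRoot]
      have hk := key2 ((k : ℂ) + 1)
      rw [← hCE] at hk
      have : C.eval ((k : ℂ) + 1) * (Complex.exp ((k : ℂ) + 1) - 1) = 0 := by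
        linear_combination hk
      rcases mul_eq_zero.mp this with h' | h'
      · exact h'
      · exact absurd (sub_eq_zero.mp h') (hexpne k)
    have hAB0 : A * B = 0 := by
      apply Polynomial.eq_zero_of_infinite_isRoot
      apply Set.infinite_of_injective_forall_mem (f := fun k : ℕ => ((k : ℂ) + 1)) natinj
      intro k
      simp only [Set.mem_setOf_eq, IsRoot, eval_mul]
      have hk := key ((k : ℂ) + 1)
      rw [hC0] at hk
      simp only [eval_zero, zero_mul] at hk
      have hkne : ((k : ℂ) + 1) ≠ 0 := by
        intro hcontra
        have : ((k : ℂ)) = -1 := by linear_combination hcontra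
        have hre : ((k : ℝ)) = -1 := by exact_mod_cast congrArg Complex.re this
        have : (0:ℝ) ≤ (k : ℝ) := Nat.cast_nonneg k
        linarith
      exact (mul_eq_zero.mp hk.symm).resolve_left hkne
    rcases mul_eq_zero.mp hAB0 with h' | h'
    · exact hA h'
    · exact hB h'
end

section
/- The entire function f(z) = e^z − 1 satisfies, for every z ∈ ℂ, the identity f(z)⁵ + 10·f(z)·f′(z) + 5·f′(z) + 1 = e^{5z} − 5·e^{4z} + 10·e^{3z}; moreover, there do not exist a non-vanishing rational function q and a polynomial P with f(z) = q(z)·e^{P(z)} for all z ∈ ℂ outside the poles of q. (This shows that in part (I) of the main theorem the degree bound d ≤ n−k−1 cannot be relaxed to d ≤ n−k: here k = 3, n = 5, d = 2.) -/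
open Complex Polynomial

/-- `f(z) = e^z − 1` solves
`f⁵ + 10ff' + 5f' + 1 = e^{5z} − 5e^{4z} + 10e^{3z}`, but is not of the form
`q(z)e^{P(z)}` with `q` a non-vanishing rational function and `P` a polynomial. -/
theorem stmt_13 :
    (∀ z : ℂ,
      (Complex.exp z - 1) ^ 5
        + 10 * (Complex.exp z - 1) * deriv (fun w => Complex.exp w - 1) z
        + 5 * deriv (fun w => Complex.exp w - 1) z + 1
      = Complex.exp (5 * z) - 5 * Complex.exp (4 * z) + 10 * Complex.exp (3 * z)) ∧
    ¬ ∃ (q : ℂ → ℂ) (P : Polynomial ℂ), IsNZRat q ∧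
        EqOffFinite (fun z => Complex.exp z - 1)
          (fun z => q z * Complex.exp (P.eval z)) := by
  constructor
  · intro z
    have hd : deriv (fun w => Complex.exp w - 1) z = Complex.exp z := by
      simp [deriv_sub, Complex.differentiableAt_exp]
    rw [hd, show (5:ℂ)*z = z+z+z+z+z by ring, show (4:ℂ)*z = z+z+z+z by ring,
      show (3:ℂ)*z = z+z+z by ring]
    simp only [Complex.exp_add]
    ring
  · rintro ⟨q, P, hrat, hoff⟩
    obtain ⟨A, B, hA, hB, hq⟩ := hrat
    obtain ⟨S, hS, heq⟩ := hoff
    set p : ℕ → ℂ := fun n => (n : ℂ) * (2 * Real.pi * Complex.I) with hp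
    have hinj : Function.Injective p := by
      intro m n h
      have h2 : (2 * Real.pi * Complex.I : ℂ) ≠ 0 := by
        simp [Real.pi_ne_zero, Complex.I_ne_zero]
      have := mul_right_cancel₀ h2 h
      exact_mod_cast this
    have hexp : ∀ n : ℕ, Complex.exp (p n) = 1 := by
      intro n
      have := Complex.exp_int_mul_two_pi_mul_I (n : ℤ)
      push_cast at this ⊢
      convert this using 2
    have hmem : ∀ n : ℕ, p n ∈ S ∪ {z | B.eval z = 0} ∪ {z | A.eval z = 0} := by
      intro n
      by_cases h1 : p n ∈ S
      · exact Or.inl (Or.inl h1)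
      by_cases h2 : B.eval (p n) = 0
      · exact Or.inl (Or.inr h2)
      right
      have h3 := heq (p n) h1
      simp only [hexp n, sub_self] at h3
      rw [hq _ h2] at h3
      have h4 : A.eval (p n) / B.eval (p n) = 0 :=
        ((mul_eq_zero.mp h3.symm).resolve_right (Complex.exp_ne_zero _))
      exact (div_eq_zero_iff.mp h4).resolve_right h2
    have hfin : (S ∪ {z | B.eval z = 0} ∪ {z | A.eval z = 0}).Finite :=
      (hS.union (Polynomial.finite_setOf_isRoot hB)).union (Polynomial.finite_setOf_isRoot hA)
    exact (Set.infinite_of_injective_forall_mem hinj hmem) hfin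
end

section
/- The entire function f(z) = e^z + z − 1 satisfies, for every z ∈ ℂ, the identity f(z)⁵ − 4(z−1)⁴·f″(z) − (z−1)⁴·f(z) = e^{5z} + 5(z−1)·e^{4z} + 10(z−1)²·e^{3z} + 10(z−1)³·e^{2z}; moreover, there do not exist a non-vanishing rational function q and a polynomial P with f(z) = q(z)·e^{P(z)} for all z ∈ ℂ outside the poles of q. (This shows that in part (IB) of the main theorem the bound n ≥ k+2 is best possible: here k = 4, n = 5 = k+1 and d = 1 = n−k, and the conclusion fails.) -/
open Complex Polynomial

/-- If `e^z · R(z) = S(z)` for polynomials `R, S` and all `z`, then `R = 0` and `S = 0`. -/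
lemma poly_exp_eq_zero (R S : Polynomial ℂ)
    (h : ∀ z : ℂ, Complex.exp z * R.eval z = S.eval z) : R = 0 ∧ S = 0 := by
  -- First, R = S : evaluate at z = 2πik.
  have hRS : R = S := by
    have hsub : R - S = 0 := by
      apply Polynomial.eq_zero_of_infinite_isRoot
      apply Set.infinite_of_injective_forall_mem
        (f := fun k : ℕ => (k : ℂ) * (2 * Real.pi * I))
      · intro a b hab
        have h2 : (2 * (Real.pi:ℂ) * I) ≠ 0 := by
          simp [Real.pi_ne_zero, Complex.I_ne_zero, Complex.ofReal_ne_zero]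
        have hab' : (a : ℂ) * (2 * (Real.pi:ℂ) * I) = (b : ℂ) * (2 * (Real.pi:ℂ) * I) := by
          simpa using hab
        exact_mod_cast mul_right_cancel₀ h2 hab'
      · intro k
        have he : Complex.exp ((k : ℂ) * (2 * Real.pi * I)) = 1 :=
          Complex.exp_nat_mul_two_pi_mul_I k
        have := h ((k : ℂ) * (2 * Real.pi * I))
        rw [he, one_mul] at this
        simp [Polynomial.IsRoot, this]
    exact sub_eq_zero.mp hsub
  -- Then (e^z - 1) R(z) = 0 for all z, and e^n ≠ 1 for n ≥ 1.
  have hR : R = 0 := by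
    apply Polynomial.eq_zero_of_infinite_isRoot
    apply Set.infinite_of_injective_forall_mem (f := fun k : ℕ => ((k : ℂ) + 1))
    · intro a b hab; simpa using hab
    · intro k
      have hk := h ((k : ℂ) + 1)
      rw [← hRS] at hk
      have hne : Complex.exp ((k : ℂ) + 1) ≠ 1 := by
        have : ((k : ℂ) + 1) = (((k : ℝ) + 1 : ℝ) : ℂ) := by push_cast; ring
        rw [this, ← Complex.ofReal_exp]
        intro hcon
        have h1 : Real.exp ((k : ℝ) + 1) = 1 := by exact_mod_cast hcon
        have h2 : (1:ℝ) < Real.exp ((k : ℝ) + 1) := by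
          nlinarith [Real.add_one_le_exp ((k : ℝ) + 1), Nat.cast_nonneg (α := ℝ) k]
        linarith
      have : (Complex.exp ((k : ℂ) + 1) - 1) * R.eval ((k : ℂ) + 1) = 0 := by
        linear_combination hk
      rcases mul_eq_zero.mp this with h' | h'
      · exact absurd (by linear_combination h') hne
      · exact h'
  exact ⟨hR, by rw [← hRS, hR]⟩

/-- `f(z) = e^z + z − 1` solves
`f⁵ − 4(z−1)⁴f'' − (z−1)⁴f = e^{5z} + 5(z−1)e^{4z} + 10(z−1)²e^{3z} + 10(z−1)³e^{2z}`,
but is not of the form `q(z)e^{P(z)}` with `q` a non-vanishing rational function and `P`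
a polynomial. -/
theorem stmt_14 :
    (∀ z : ℂ,
      (Complex.exp z + z - 1) ^ 5
        - 4 * (z - 1) ^ 4 * iteratedDeriv 2 (fun w => Complex.exp w + w - 1) z
        - (z - 1) ^ 4 * (Complex.exp z + z - 1)
      = Complex.exp (5 * z) + 5 * (z - 1) * Complex.exp (4 * z)
        + 10 * (z - 1) ^ 2 * Complex.exp (3 * z)
        + 10 * (z - 1) ^ 3 * Complex.exp (2 * z)) ∧
    ¬ ∃ (q : ℂ → ℂ) (P : Polynomial ℂ), IsNZRat q ∧
        EqOffFinite (fun z => Complex.exp z + z - 1)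
          (fun z => q z * Complex.exp (P.eval z)) := by
  constructor
  · -- the differential identity
    intro z
    have hd2 : iteratedDeriv 2 (fun w => Complex.exp w + w - 1) z = Complex.exp z := by
      have h1 : deriv (fun w : ℂ => Complex.exp w + w - 1) = fun w => Complex.exp w + 1 := by
        funext w
        exact (((Complex.hasDerivAt_exp w).add (hasDerivAt_id w)).sub_const 1).deriv
      rw [show (2:ℕ) = 1 + 1 from rfl, iteratedDeriv_succ, iteratedDeriv_one, h1]
      exact ((Complex.hasDerivAt_exp z).add_const 1).deriv
    rw [hd2]
    have e5 : Complex.exp (5 * z) = Complex.exp z ^ 5 := by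
      rw [show (5:ℂ) = ((5:ℕ):ℂ) by norm_num, Complex.exp_nat_mul]
    have e4 : Complex.exp (4 * z) = Complex.exp z ^ 4 := by
      rw [show (4:ℂ) = ((4:ℕ):ℂ) by norm_num, Complex.exp_nat_mul]
    have e3 : Complex.exp (3 * z) = Complex.exp z ^ 3 := by
      rw [show (3:ℂ) = ((3:ℕ):ℂ) by norm_num, Complex.exp_nat_mul]
    have e2 : Complex.exp (2 * z) = Complex.exp z ^ 2 := by
      rw [show (2:ℂ) = ((2:ℕ):ℂ) by norm_num, Complex.exp_nat_mul]
    rw [e5, e4, e3, e2]; ring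
  · -- impossibility of f = q e^P
    rintro ⟨q, P, ⟨A, B, hA, hB, hq⟩, ⟨S, hSfin, hS⟩⟩
    -- the two entire functions agree off a finite set, hence everywhere
    have hT : (S ∪ {x : ℂ | B.IsRoot x}).Finite :=
      hSfin.union (Polynomial.finite_setOf_isRoot hB)
    have hdense : Dense (S ∪ {x : ℂ | B.IsRoot x})ᶜ :=
      Set.Countable.dense_compl ℂ hT.countable
    have hcont1 : Continuous (fun z : ℂ => B.eval z * (Complex.exp z + z - 1)) :=
      B.continuous.mul (by continuity)
    have hcont2 : Continuous (fun z : ℂ => A.eval z * Complex.exp (P.eval z)) :=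
      A.continuous.mul (Complex.continuous_exp.comp P.continuous)
    have key : (fun z : ℂ => B.eval z * (Complex.exp z + z - 1))
        = fun z : ℂ => A.eval z * Complex.exp (P.eval z) := by
      apply Continuous.ext_on hdense hcont1 hcont2
      intro z hz
      simp only [Set.mem_compl_iff, Set.mem_union, Set.mem_setOf_eq, not_or] at hz
      have hBz : B.eval z ≠ 0 := hz.2
      have hfz := hS z hz.1
      simp only at hfz
      show B.eval z * (Complex.exp z + z - 1) = A.eval z * Complex.exp (P.eval z)
      rw [hfz, hq z hBz]
      field_simp
    have key' : ∀ z : ℂ, B.eval z * (Complex.exp z + z - 1)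
        = A.eval z * Complex.exp (P.eval z) := fun z => congrFun key z
    -- differentiate
    have hd : ∀ z : ℂ,
        B.derivative.eval z * (Complex.exp z + z - 1) + B.eval z * (Complex.exp z + 1)
        = A.derivative.eval z * Complex.exp (P.eval z)
          + A.eval z * (Complex.exp (P.eval z) * P.derivative.eval z) := by
      intro z
      have h1 : HasDerivAt (fun z : ℂ => B.eval z * (Complex.exp z + z - 1))
          (B.derivative.eval z * (Complex.exp z + z - 1) + B.eval z * (Complex.exp z + 1)) z :=
        (B.hasDerivAt z).mul (((Complex.hasDerivAt_exp z).add (hasDerivAt_id z)).sub_const 1)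
      have h2 : HasDerivAt (fun z : ℂ => A.eval z * Complex.exp (P.eval z))
          (A.derivative.eval z * Complex.exp (P.eval z)
            + A.eval z * (Complex.exp (P.eval z) * P.derivative.eval z)) z :=
        (A.hasDerivAt z).mul (P.hasDerivAt z).cexp
      rw [key] at h1
      exact h1.unique h2
    -- extract the polynomial identity
    set C : Polynomial ℂ := A.derivative + A * P.derivative with hC
    set R : Polynomial ℂ := A * (B.derivative + B) - C * B with hRdef
    set Sp : Polynomial ℂ := C * B * (X - 1)
      - A * (B.derivative * (X - 1) + B) with hSpdef
    have hRS : ∀ z : ℂ, Complex.exp z * R.eval z = Sp.eval z := by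
      intro z
      have e1 := key' z
      have e2 := hd z
      simp only [hRdef, hSpdef, hC, eval_sub, eval_add, eval_mul, eval_X, eval_C, eval_one]
      linear_combination (A.eval z) * e2
        - (A.derivative.eval z + A.eval z * P.derivative.eval z) * e1
    obtain ⟨hR0, hSp0⟩ := poly_exp_eq_zero R Sp hRS
    rw [hRdef, sub_eq_zero] at hR0
    rw [hSpdef, sub_eq_zero] at hSp0
    -- derive A * B * (X - 2) = 0
    have hfin : A * B * (X - 2) = 0 := by
      linear_combination (X - 1) * hR0 + hSp0
    have hX2 : (X - 2 : Polynomial ℂ) ≠ 0 := by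
      intro h
      have := congrArg (Polynomial.eval 0) h
      simp at this
    exact (mul_ne_zero (mul_ne_zero hA hB) hX2) hfin
end

section
/- The entire function f(z) = e^z + 1 satisfies, for every z ∈ ℂ, the identity f(z)⁷ − (7/2)·f(z)⁵·f′(z) − (7/2)·f(z)·f′(z) − 1 = e^{7z} + (7/2)·e^{6z} + (7/2)·e^{5z}; moreover, there do not exist a non-vanishing rational function q and a polynomial P with f(z) = q(z)·e^{P(z)} for all z ∈ ℂ outside the poles of q. (This shows that in part (II) of the main theorem the degree bound d ≤ n−k−3 is sharp: here a = −7/2 ≠ 0, k = 3, n = 7 and d = 2 > n−k−3 = 1, and the conclusion fails.) -/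
open Complex Polynomial

/-- `f(z) = e^z + 1` solves
`f⁷ − (7/2)f⁵f' − (7/2)ff' − 1 = e^{7z} + (7/2)e^{6z} + (7/2)e^{5z}`, but is not of the
form `q(z)e^{P(z)}` with `q` a non-vanishing rational function and `P` a polynomial. -/
theorem stmt_15 :
    (∀ z : ℂ,
      (Complex.exp z + 1) ^ 7
        - 7 / 2 * (Complex.exp z + 1) ^ 5 * deriv (fun w => Complex.exp w + 1) z
        - 7 / 2 * (Complex.exp z + 1) * deriv (fun w => Complex.exp w + 1) z - 1
      = Complex.exp (7 * z) + 7 / 2 * Complex.exp (6 * z)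
        + 7 / 2 * Complex.exp (5 * z)) ∧
    ¬ ∃ (q : ℂ → ℂ) (P : Polynomial ℂ), IsNZRat q ∧
        EqOffFinite (fun z => Complex.exp z + 1)
          (fun z => q z * Complex.exp (P.eval z)) := by
  constructor
  · intro z
    have hd : deriv (fun w => Complex.exp w + 1) z = Complex.exp z := by
      simp
    have h7 : Complex.exp (7 * z) = Complex.exp z ^ 7 := by
      rw [show (7 : ℂ) * z = (7 : ℕ) * z by norm_num, Complex.exp_nat_mul]
    have h6 : Complex.exp (6 * z) = Complex.exp z ^ 6 := by
      rw [show (6 : ℂ) * z = (6 : ℕ) * z by norm_num, Complex.exp_nat_mul]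
    have h5 : Complex.exp (5 * z) = Complex.exp z ^ 5 := by
      rw [show (5 : ℂ) * z = (5 : ℕ) * z by norm_num, Complex.exp_nat_mul]
    rw [hd, h7, h6, h5]; ring
  · rintro ⟨q, P, ⟨A, B, hA, hB, hq⟩, S, hS, hEq⟩
    classical
    set T : Set ℂ := S ∪ {z | B.eval z = 0} with hT
    have hTfin : T.Finite := hS.union (Polynomial.finite_setOf_isRoot hB)
    have key : ∀ z : ℂ, z ∉ T → Complex.exp z + 1 = 0 → A.eval z = 0 := by
      intro z hz h0
      have hBz : B.eval z ≠ 0 := fun h => hz (Or.inr h)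
      have h1 : Complex.exp z + 1 = q z * Complex.exp (P.eval z) :=
        hEq z (fun h => hz (Or.inl h))
      rw [hq z hBz, h0] at h1
      have h3 : A.eval z / B.eval z = 0 := by
        rcases mul_eq_zero.mp h1.symm with h | h
        · exact h
        · exact absurd h (Complex.exp_ne_zero _)
      exact (div_eq_zero_iff.mp h3).resolve_right hBz
    set g : ℕ → ℂ := fun k => Real.pi * Complex.I + (k : ℂ) * (2 * Real.pi * Complex.I)
      with hg
    have hπI : (2 : ℂ) * Real.pi * Complex.I ≠ 0 := by
      simp [Real.pi_ne_zero, Complex.I_ne_zero]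
    have hinj : Function.Injective g := by
      intro a b h
      have h' := add_left_cancel h
      have := mul_right_cancel₀ hπI h'
      exact_mod_cast this
    have hexp : ∀ k : ℕ, Complex.exp (g k) = -1 := by
      intro k
      have h1 : Complex.exp ((k : ℂ) * (2 * Real.pi * Complex.I)) = 1 := by
        have := Complex.exp_int_mul_two_pi_mul_I (k : ℤ)
        push_cast at this
        exact this
      rw [hg]
      simp [Complex.exp_add, h1, Complex.exp_pi_mul_I]
    have hbadfin : {k : ℕ | g k ∈ T}.Finite :=
      Set.Finite.preimage hinj.injOn hTfin
    have hgoodinf : {k : ℕ | g k ∉ T}.Infinite := by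
      have : {k : ℕ | g k ∉ T} = ({k : ℕ | g k ∈ T})ᶜ := rfl
      rw [this]
      exact hbadfin.infinite_compl
    have hroots : {z : ℂ | A.IsRoot z}.Infinite := by
      refine Set.Infinite.mono ?_ (hgoodinf.image hinj.injOn)
      rintro _ ⟨k, hk, rfl⟩
      exact key (g k) hk (by rw [hexp k]; ring)
    exact hA (Polynomial.eq_zero_of_infinite_isRoot A hroots)
end
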